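/- arXiv:1706.03591 — 3 statements merged into one kernel-verified Lean document; each statement's English description precedes it below -/
import Mathlib

section
/- Let n ≥ k and d ≥ k. For any orthogonal matrix Q ∈ ℝ^{d×d}, the SC cost C_Φ and the CSC cost C_Ψ satisfy C_Φ ≤ C_Ψ ≤ C_Φ + 2·‖Ψ − Φ I_{k×d} Q‖_F. -/
open Matrix MeasureTheory ProbabilityTheory Finset

noncomputable section

/-- The `a × b` matrix with ones on the main diagonal and zeros elsewhere. -/
def rectId (a b : ℕ) : Matrix (Fin a) (Fin b) ℝ :=
  Matrix.of fun i j => if (i : ℕ) = (j : ℕ) then 1 else 0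

/-- Frobenius norm of a real matrix. -/
def frob {a b : ℕ} (M : Matrix (Fin a) (Fin b) ℝ) : ℝ :=
  Real.sqrt (∑ i, ∑ j, (M i j) ^ 2)

/-- Euclidean norm of a vector. -/
def enorm2 {a : ℕ} (v : Fin a → ℝ) : ℝ :=
  Real.sqrt (∑ i, (v i) ^ 2)

/-- `X` is the cluster-indicator matrix of the partition of `Fin n` into the
(nonempty) fibers of the surjective map `f : Fin n → Fin k`. -/
def IsIndicatorOf {n k : ℕ} (f : Fin n → Fin k) (X : Matrix (Fin n) (Fin k) ℝ) : Prop :=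
  Function.Surjective f ∧
    ∀ i j, X i j =
      if f i = j then 1 / Real.sqrt ((Finset.univ.filter fun i' => f i' = j).card) else 0

/-- `X` is a cluster-indicator matrix of a partition into `k` nonempty clusters. -/
def IsIndicator {n k : ℕ} (X : Matrix (Fin n) (Fin k) ℝ) : Prop :=
  ∃ f : Fin n → Fin k, IsIndicatorOf f X

/-- The k-means cost of the assignment `X` on the feature matrix `M`. -/
def kmeansCost {n k m : ℕ} (M : Matrix (Fin n) (Fin m) ℝ)
    (X : Matrix (Fin n) (Fin k) ℝ) : ℝ :=
  frob (M - X * Xᵀ * M)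

/-- `X` minimizes the k-means cost on features `M` over all indicator matrices. -/
def IsOptAssign {n k m : ℕ} (M : Matrix (Fin n) (Fin m) ℝ)
    (X : Matrix (Fin n) (Fin k) ℝ) : Prop :=
  IsIndicator X ∧
    ∀ Y : Matrix (Fin n) (Fin k) ℝ, IsIndicator Y → kmeansCost M X ≤ kmeansCost M Y

/-- Law of an `n × d` random matrix with i.i.d. Gaussian entries of
mean `0` and variance `1 / d`. -/
def gaussMeasure (n d : ℕ) : Measure (Fin n → Fin d → ℝ) :=
  Measure.pi fun _ => Measure.pi fun _ => gaussianReal 0 (d : NNReal)⁻¹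

/-! The k-means cost `‖M - X Xᵀ M‖_F` is the norm of the projection of `M` onto the orthogonal
complement of the columns of `X`, so it is 1-Lipschitz in `M`, and it is unchanged when `M` is
multiplied on the right by a matrix `B` with orthonormal rows, such as `B = I_{k×d} Q`. Hence
`Φ` and `Φ B` have the same costs, `Φ B` is within `‖Ψ - Φ B‖_F` of `Ψ`, and passing from `Φ B`
to `Ψ` and back around the optimality of `X*_Ψ` for `Ψ` costs that distance twice. -/

section Frobenius

attribute [local instance] Matrix.frobeniusNormedAddCommGroup

lemma frob_eq_norm {a b : ℕ} (M : Matrix (Fin a) (Fin b) ℝ) : frob M = ‖M‖ := by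
  simp [frob, frobenius_norm_def, Real.sqrt_eq_rpow]

lemma frob_add_le {a b : ℕ} (A B : Matrix (Fin a) (Fin b) ℝ) :
    frob (A + B) ≤ frob A + frob B := by
  simpa only [frob_eq_norm] using norm_add_le A B

lemma frob_sub_comm {a b : ℕ} (A B : Matrix (Fin a) (Fin b) ℝ) :
    frob (A - B) = frob (B - A) := by
  simpa only [frob_eq_norm] using norm_sub_rev A B

end Frobenius

lemma frob_nonneg {a b : ℕ} (M : Matrix (Fin a) (Fin b) ℝ) : 0 ≤ frob M :=
  Real.sqrt_nonneg _

lemma frob_sq {a b : ℕ} (M : Matrix (Fin a) (Fin b) ℝ) : frob M ^ 2 = trace (Mᵀ * M) := by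
  rw [frob, Real.sq_sqrt (by positivity), trace_mul_comm]
  simp [trace, mul_apply, sq]

lemma frob_mul_of_mul_transpose_eq_one {a k d : ℕ} (M : Matrix (Fin a) (Fin k) ℝ)
    {B : Matrix (Fin k) (Fin d) ℝ} (hB : B * Bᵀ = 1) : frob (M * B) = frob M := by
  rw [← sq_eq_sq₀ (frob_nonneg _) (frob_nonneg _), frob_sq, frob_sq, transpose_mul,
    Matrix.mul_assoc, trace_mul_comm, Matrix.mul_assoc, Matrix.mul_assoc, hB, Matrix.mul_one]

lemma rectId_mul_transpose {k d : ℕ} (hkd : k ≤ d) : rectId k d * (rectId k d)ᵀ = 1 := by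
  have h : rectId k d = (1 : Matrix (Fin d) (Fin d) ℝ).submatrix (Fin.castLE hkd) id := by
    ext i j
    simp [rectId, one_apply, Fin.ext_iff]
  rw [h, transpose_submatrix, ← submatrix_mul _ _ _ _ _ Function.bijective_id, transpose_one,
    Matrix.one_mul, submatrix_one _ (Fin.castLE_injective hkd)]

lemma IsIndicator.transpose_mul_self {n k : ℕ} {X : Matrix (Fin n) (Fin k) ℝ}
    (h : IsIndicator X) : Xᵀ * X = 1 := by
  obtain ⟨f, hf, hX⟩ := h
  ext j j'
  simp only [mul_apply, transpose_apply, one_apply, hX, ite_zero_mul_ite_zero]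
  split_ifs with hjj
  · subst hjj
    have hpos : (0 : ℝ) < (univ.filter fun i => f i = j).card := by
      obtain ⟨i, hi⟩ := hf j
      exact_mod_cast Finset.card_pos.2 ⟨i, by simp [hi]⟩
    simp only [and_self, ← Finset.sum_filter, sum_const, nsmul_eq_mul]
    field_simp
    rw [Real.sq_sqrt hpos.le]
  · refine Finset.sum_eq_zero fun i _ => if_neg ?_
    rintro ⟨h1, h2⟩
    exact hjj (h1.symm.trans h2)

lemma kmeansCost_mul_of_mul_transpose_eq_one {n k m d : ℕ} (M : Matrix (Fin n) (Fin m) ℝ)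
    (X : Matrix (Fin n) (Fin k) ℝ) {B : Matrix (Fin m) (Fin d) ℝ} (hB : B * Bᵀ = 1) :
    kmeansCost (M * B) X = kmeansCost M X := by
  rw [kmeansCost, kmeansCost, ← frob_mul_of_mul_transpose_eq_one _ hB, Matrix.sub_mul]
  simp only [Matrix.mul_assoc]

lemma kmeansCost_le_frob {n k m : ℕ} (M : Matrix (Fin n) (Fin m) ℝ)
    {X : Matrix (Fin n) (Fin k) ℝ} (hX : Xᵀ * X = 1) : kmeansCost M X ≤ frob M := by
  set P := X * Xᵀ with hP
  have hPt : Pᵀ = P := by rw [hP, transpose_mul, transpose_transpose]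
  have hPPM : P * (P * M) = P * M := by
    simp only [hP, Matrix.mul_assoc]
    rw [← Matrix.mul_assoc Xᵀ X, hX, Matrix.one_mul]
  have pythagoras : frob (M - P * M) ^ 2 + frob (P * M) ^ 2 = frob M ^ 2 := by
    simp only [frob_sq, ← trace_add]
    congr 1
    simp only [transpose_sub, transpose_mul, hPt, Matrix.sub_mul, Matrix.mul_sub,
      Matrix.mul_assoc, hPPM]
    abel
  rw [kmeansCost, ← hP, ← pow_le_pow_iff_left₀ (frob_nonneg _) (frob_nonneg _) two_ne_zero]
  nlinarith [sq_nonneg (frob (P * M))]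

lemma kmeansCost_le_add_frob_sub {n k m : ℕ} (M N : Matrix (Fin n) (Fin m) ℝ)
    {X : Matrix (Fin n) (Fin k) ℝ} (hX : Xᵀ * X = 1) :
    kmeansCost M X ≤ kmeansCost N X + frob (M - N) :=
  calc kmeansCost M X
      = frob ((N - X * Xᵀ * N) + ((M - N) - X * Xᵀ * (M - N))) := by
        rw [kmeansCost, Matrix.mul_sub]; abel_nf
    _ ≤ kmeansCost N X + kmeansCost (M - N) X := frob_add_le _ _
    _ ≤ kmeansCost N X + frob (M - N) := by grw [kmeansCost_le_frob (M - N) hX]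

theorem statement0_general {n k d : ℕ} (hkd : k ≤ d)
    (Φ : Matrix (Fin n) (Fin k) ℝ)
    (Ψ : Matrix (Fin n) (Fin d) ℝ)
    (Q : Matrix (Fin d) (Fin d) ℝ) (hQ : Qᵀ * Q = 1)
    (XΦ XΨ : Matrix (Fin n) (Fin k) ℝ)
    (hXΦ : IsOptAssign Φ XΦ) (hXΨ : IsOptAssign Ψ XΨ) :
    kmeansCost Φ XΦ ≤ kmeansCost Φ XΨ ∧
      kmeansCost Φ XΨ ≤ kmeansCost Φ XΦ + 2 * frob (Ψ - Φ * rectId k d * Q) := by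
  obtain ⟨hXΦ, hΦopt⟩ := hXΦ
  obtain ⟨hXΨ, hΨopt⟩ := hXΨ
  set B := rectId k d * Q
  have hB : B * Bᵀ = 1 := by
    rw [transpose_mul, Matrix.mul_assoc, ← Matrix.mul_assoc Q, mul_eq_one_comm.mp hQ,
      Matrix.one_mul, rectId_mul_transpose hkd]
  refine ⟨hΦopt XΨ hXΨ, ?_⟩
  rw [Matrix.mul_assoc]
  calc kmeansCost Φ XΨ
      = kmeansCost (Φ * B) XΨ := (kmeansCost_mul_of_mul_transpose_eq_one _ _ hB).symm
    _ ≤ kmeansCost Ψ XΨ + frob (Ψ - Φ * B) := by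
        rw [← frob_sub_comm]; exact kmeansCost_le_add_frob_sub _ _ hXΨ.transpose_mul_self
    _ ≤ kmeansCost Ψ XΦ + frob (Ψ - Φ * B) := by grw [hΨopt XΦ hXΦ]
    _ ≤ kmeansCost (Φ * B) XΦ + frob (Ψ - Φ * B) + frob (Ψ - Φ * B) := by
        grw [kmeansCost_le_add_frob_sub Ψ (Φ * B) hXΦ.transpose_mul_self]
    _ = kmeansCost Φ XΦ + 2 * frob (Ψ - Φ * B) := by
        rw [kmeansCost_mul_of_mul_transpose_eq_one _ _ hB]; ring

/-- For any orthogonal `Q`, `C_Φ ≤ C_Ψ ≤ C_Φ + 2‖Ψ − Φ I_{k×d} Q‖_F`. -/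
theorem statement0 {n k d : ℕ} (hnk : k ≤ n) (hkd : k ≤ d)
    (U : Matrix (Fin n) (Fin n) ℝ) (hU : Uᵀ * U = 1)
    (R : Matrix (Fin n) (Fin d) ℝ)
    (Φ : Matrix (Fin n) (Fin k) ℝ) (hΦ : Φ = U * rectId n k)
    (Ψ : Matrix (Fin n) (Fin d) ℝ) (hΨ : Ψ = Φ * Φᵀ * R)
    (Q : Matrix (Fin d) (Fin d) ℝ) (hQ : Qᵀ * Q = 1)
    (XΦ XΨ : Matrix (Fin n) (Fin k) ℝ)
    (hXΦ : IsOptAssign Φ XΦ) (hXΨ : IsOptAssign Ψ XΨ) :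
    kmeansCost Φ XΦ ≤ kmeansCost Φ XΨ ∧
      kmeansCost Φ XΨ ≤ kmeansCost Φ XΦ + 2 * frob (Ψ - Φ * rectId k d * Q) :=
  statement0_general hkd Φ Ψ Q hQ XΦ XΨ hXΦ hXΨ
end
end

section
/- Let n ≥ k, d ≥ k and t ≥ 0. If every singular value σ_i of R' = Φᵀ R ∈ ℝ^{k×d} satisfies |σ_i − 1| ≤ (√k + t)/√d, then there exists an orthogonal matrix Q ∈ ℝ^{d×d} such that ‖Ψ − Φ I_{k×d} Q‖_F ≤ √(k/d)·(√k + t). -/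
/-! Polar decomposition. Diagonalize `R' R'ᵀ = A diag(λ) Aᵀ`; the rows of `Aᵀ R'` are
orthogonal of lengths `σᵢ = √λᵢ`, so `Aᵀ R' = diag(σ) W` where `W` has orthonormal rows
(normalize the nonzero rows and complete them to an orthonormal basis). Completing the
orthonormal rows of `A W` to an orthogonal `Q` gives `I_{k×d} Q = A W`, hence
`Ψ - Φ I_{k×d} Q = Φ A diag(σ - 1) W`, whose Frobenius norm is
`√(∑ (σᵢ - 1)²) ≤ √k (√k + t) / √d`. -/

open Matrix MeasureTheory ProbabilityTheory Finset

noncomputable section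

lemma transpose_rectId (a b : ℕ) : (rectId a b)ᵀ = rectId b a := by
  ext i j
  simp [rectId, eq_comm]

lemma rectId_mul_apply {a b c : ℕ} (hab : a ≤ b) (M : Matrix (Fin b) (Fin c) ℝ) (i : Fin a) :
    (rectId a b * M) i = M (Fin.castLE hab i) := by
  ext j
  rw [mul_apply, Finset.sum_eq_single (Fin.castLE hab i)]
  · simp [rectId]
  · intro l _ hl
    have : (i : ℕ) ≠ l := fun h => hl (Fin.ext h.symm)
    simp [rectId, this]
  · simp

lemma rectId_mul_transpose_rectId {a b : ℕ} (hab : a ≤ b) :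
    rectId a b * (rectId a b)ᵀ = 1 := by
  ext i j
  rw [rectId_mul_apply hab, transpose_rectId]
  simp [rectId, one_apply, Fin.ext_iff]

lemma frob_eq_sqrt_trace {a b : ℕ} (M : Matrix (Fin a) (Fin b) ℝ) :
    frob M = √(Mᵀ * M).trace := by
  rw [frob, trace, Finset.sum_comm]
  simp [mul_apply, sq]

lemma frob_transpose {a b : ℕ} (M : Matrix (Fin a) (Fin b) ℝ) : frob Mᵀ = frob M := by
  rw [frob, frob, Finset.sum_comm]
  rfl

lemma frob_mul_of_transpose_mul_self_eq_one {a b c : ℕ} {P : Matrix (Fin a) (Fin b) ℝ}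
    (hP : Pᵀ * P = 1) (M : Matrix (Fin b) (Fin c) ℝ) : frob (P * M) = frob M := by
  rw [frob_eq_sqrt_trace, frob_eq_sqrt_trace, transpose_mul, Matrix.mul_assoc,
    ← Matrix.mul_assoc Pᵀ, hP, Matrix.one_mul]

lemma frob_mul_of_mul_transpose_self_eq_one {a b c : ℕ} {W : Matrix (Fin b) (Fin c) ℝ}
    (hW : W * Wᵀ = 1) (M : Matrix (Fin a) (Fin b) ℝ) : frob (M * W) = frob M := by
  rw [← frob_transpose, transpose_mul,
    frob_mul_of_transpose_mul_self_eq_one (by rwa [transpose_transpose]), frob_transpose]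

lemma frob_diagonal {a : ℕ} (v : Fin a → ℝ) : frob (diagonal v) = √(∑ i, v i ^ 2) := by
  rw [frob]
  congr 1
  refine Finset.sum_congr rfl fun i _ => ?_
  rw [Finset.sum_eq_single i (fun j _ hj => by simp [diagonal_apply_ne _ hj.symm]) (by simp)]
  simp

lemma sqrt_sum_sq_le_of_abs_le {ι : Type*} [Fintype ι] {a : ι → ℝ} {c : ℝ}
    (h : ∀ i, |a i| ≤ c) : √(∑ i, a i ^ 2) ≤ √(Fintype.card ι) * c := by
  rcases isEmpty_or_nonempty ι with hι | ⟨⟨i₀⟩⟩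
  · simp
  have hc : 0 ≤ c := (abs_nonneg _).trans (h i₀)
  calc √(∑ i, a i ^ 2) ≤ √(∑ _i : ι, c ^ 2) :=
        Real.sqrt_le_sqrt (Finset.sum_le_sum fun i _ => sq_le_sq' (abs_le.mp (h i)).1
          (abs_le.mp (h i)).2)
    _ = √(Fintype.card ι) * c := by
        rw [Finset.sum_const, Finset.card_univ, nsmul_eq_mul, Real.sqrt_mul (Nat.cast_nonneg _),
          Real.sqrt_sq hc]

lemma exists_orthogonal_rectId_mul_eq {k d : ℕ} (hkd : k ≤ d) (W : Matrix (Fin k) (Fin d) ℝ)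
    (s : Set (Fin k))
    (hW : ∀ i ∈ s, ∀ j ∈ s, (W * Wᵀ) i j = (1 : Matrix (Fin k) (Fin k) ℝ) i j) :
    ∃ Q : Matrix (Fin d) (Fin d) ℝ, Qᵀ * Q = 1 ∧ ∀ i ∈ s, (rectId k d * Q) i = W i := by
  classical
  set v : Fin d → EuclideanSpace ℝ (Fin d) :=
    fun j => if h : (j : ℕ) < k then WithLp.toLp 2 (W ⟨j, h⟩) else 0
  have hv : ∀ i, v (Fin.castLE hkd i) = WithLp.toLp 2 (W i) := fun i => by simp [v, i.isLt]
  have hon : Orthonormal ℝ ((Fin.castLE hkd '' s).domRestrict v) := by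
    rw [orthonormal_iff_ite]
    rintro ⟨_, i, hi, rfl⟩ ⟨_, j, hj, rfl⟩
    have := hW j hj i hi
    simp only [mul_apply, transpose_apply, one_apply] at this
    simp [Set.domRestrict_apply, hv, PiLp.inner_apply, this, eq_comm, Subtype.ext_iff]
  obtain ⟨b, hb⟩ := hon.exists_orthonormalBasis_extension_of_card_eq (by simp)
  set P := (EuclideanSpace.basisFun (Fin d) ℝ).toBasis.toMatrix b.toBasis
  have hP : P * Pᵀ = 1 := by
    simpa [star_eq_conjTranspose, P] using mem_unitaryGroup_iff.mp
      ((EuclideanSpace.basisFun (Fin d) ℝ).toMatrix_orthonormalBasis_mem_unitary b)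
  refine ⟨Pᵀ, by rwa [transpose_transpose], fun i hi => ?_⟩
  rw [rectId_mul_apply hkd]
  ext j
  have := congrArg (fun x : EuclideanSpace ℝ (Fin d) => x j) (hb _ ⟨i, hi, rfl⟩)
  simpa [P, Module.Basis.toMatrix_apply, hv] using this

lemma exists_mul_transpose_eq_one_of_mul_transpose_eq_diagonal {k d : ℕ} (hkd : k ≤ d)
    {G : Matrix (Fin k) (Fin d) ℝ} {μ : Fin k → ℝ} (hG : G * Gᵀ = diagonal μ) :
    ∃ W : Matrix (Fin k) (Fin d) ℝ, W * Wᵀ = 1 ∧ G = diagonal (fun i => √(μ i)) * W := by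
  have hμ : ∀ i, μ i = G i ⬝ᵥ G i := fun i => by
    simpa [mul_apply', dotProduct] using (congrFun (congrFun hG i) i).symm
  have hμ_nonneg : ∀ i, 0 ≤ μ i := fun i => (hμ i).symm ▸ dotProduct_self_star_nonneg (G i)
  -- only the rows with `μ i ≠ 0` are normalized; the others are zero (and `(√0)⁻¹ = 0`)
  set V := diagonal (fun i => (√(μ i))⁻¹) * G
  have hV : V * Vᵀ = diagonal (fun i => (√(μ i))⁻¹ * μ i * (√(μ i))⁻¹) := by
    rw [transpose_mul, diagonal_transpose, Matrix.mul_assoc, ← Matrix.mul_assoc G, hG,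
      diagonal_mul_diagonal, diagonal_mul_diagonal]
    simp only [mul_assoc]
  obtain ⟨Q, hQ, hQV⟩ := exists_orthogonal_rectId_mul_eq hkd V {i | μ i ≠ 0}
    fun i hi j _ => by
    rw [hV]
    by_cases hij : i = j
    · subst hij
      rw [diagonal_apply_eq, one_apply_eq, mul_comm, ← mul_assoc, ← mul_inv,
        Real.mul_self_sqrt (hμ_nonneg i), inv_mul_cancel₀ hi]
    · rw [diagonal_apply_ne _ hij, one_apply_ne hij]
  refine ⟨rectId k d * Q, ?_, ?_⟩
  · rw [transpose_mul, Matrix.mul_assoc, ← Matrix.mul_assoc Q, mul_eq_one_comm.mp hQ,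
      Matrix.one_mul, rectId_mul_transpose_rectId hkd]
  ext i j
  rw [diagonal_mul]
  by_cases hi : μ i = 0
  · have : G i = 0 := dotProduct_self_eq_zero.mp ((hμ i).symm.trans hi)
    simp [hi, this]
  · rw [hQV i hi]
    simp [V, diagonal_mul, ← mul_assoc, mul_inv_cancel₀ (Real.sqrt_ne_zero'.mpr
      ((hμ_nonneg i).lt_of_ne' hi))]

lemma exists_orthogonal_frob_sub_rectId_mul_eq {k d : ℕ} (hkd : k ≤ d)
    (M : Matrix (Fin k) (Fin d) ℝ) (hH : (M * Mᵀ).IsHermitian) :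
    ∃ Q : Matrix (Fin d) (Fin d) ℝ, Qᵀ * Q = 1 ∧
      frob (M - rectId k d * Q) = √(∑ i, (√(hH.eigenvalues i) - 1) ^ 2) := by
  set A : Matrix (Fin k) (Fin k) ℝ := ↑hH.eigenvectorUnitary
  have hAA : Aᵀ * A = 1 := by
    simpa [star_eq_conjTranspose] using mem_unitaryGroup_iff'.mp hH.eigenvectorUnitary.2
  have hG : (Aᵀ * M) * (Aᵀ * M)ᵀ = diagonal hH.eigenvalues := by
    have := hH.conjStarAlgAut_star_eigenvectorUnitary
    rw [Unitary.conjStarAlgAut_star_apply] at this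
    simpa [star_eq_conjTranspose, Matrix.mul_assoc] using this
  obtain ⟨W, hWW, hGW⟩ := exists_mul_transpose_eq_one_of_mul_transpose_eq_diagonal hkd hG
  obtain ⟨Q, hQ, hQW⟩ := exists_orthogonal_rectId_mul_eq hkd (A * W) Set.univ fun _ _ _ _ => by
    rw [transpose_mul, Matrix.mul_assoc, ← Matrix.mul_assoc W, hWW, Matrix.one_mul,
      mul_eq_one_comm.mp hAA]
  refine ⟨Q, hQ, ?_⟩
  have hM : M = A * (Aᵀ * M) := by
    rw [← Matrix.mul_assoc, mul_eq_one_comm.mp hAA, Matrix.one_mul]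
  have hdiff : M - rectId k d * Q = A * (diagonal (fun i => √(hH.eigenvalues i) - 1) * W) := by
    rw [show rectId k d * Q = A * W from funext fun i => hQW i trivial, ← diagonal_sub,
      diagonal_one, Matrix.sub_mul, Matrix.one_mul, Matrix.mul_sub, ← hGW, ← hM]
  rw [hdiff, frob_mul_of_transpose_mul_self_eq_one hAA,
    frob_mul_of_mul_transpose_self_eq_one hWW, frob_diagonal]

theorem statement2_general {n k d : ℕ} (hnk : k ≤ n) (hkd : k ≤ d) (t : ℝ)
    (U : Matrix (Fin n) (Fin n) ℝ) (hU : Uᵀ * U = 1)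
    (R : Matrix (Fin n) (Fin d) ℝ)
    (Φ : Matrix (Fin n) (Fin k) ℝ) (hΦ : Φ = U * rectId n k)
    (Ψ : Matrix (Fin n) (Fin d) ℝ) (hΨ : Ψ = Φ * Φᵀ * R)
    (hH : (Φᵀ * R * (Φᵀ * R)ᵀ).IsHermitian)
    (hsing : ∀ i : Fin k,
      |Real.sqrt (hH.eigenvalues i) - 1| ≤ (Real.sqrt k + t) / Real.sqrt d) :
    ∃ Q : Matrix (Fin d) (Fin d) ℝ, Qᵀ * Q = 1 ∧
      frob (Ψ - Φ * rectId k d * Q) ≤ Real.sqrt (k / d) * (Real.sqrt k + t) := by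
  have hΦΦ : Φᵀ * Φ = 1 := by
    rw [hΦ, transpose_mul, Matrix.mul_assoc, ← Matrix.mul_assoc Uᵀ, hU, Matrix.one_mul,
      transpose_rectId, ← transpose_rectId k n, rectId_mul_transpose_rectId hnk]
  obtain ⟨Q, hQ, hfrob⟩ := exists_orthogonal_frob_sub_rectId_mul_eq hkd (Φᵀ * R) hH
  refine ⟨Q, hQ, ?_⟩
  have hdiff : Ψ - Φ * rectId k d * Q = Φ * (Φᵀ * R - rectId k d * Q) := by
    rw [hΨ, Matrix.mul_sub, Matrix.mul_assoc, Matrix.mul_assoc]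
  calc frob (Ψ - Φ * rectId k d * Q)
      = √(∑ i, (√(hH.eigenvalues i) - 1) ^ 2) := by
        rw [hdiff, frob_mul_of_transpose_mul_self_eq_one hΦΦ, hfrob]
    _ ≤ √k * ((√k + t) / √d) := by
        simpa using sqrt_sum_sq_le_of_abs_le hsing
    _ = √(k / d) * (√k + t) := by
        rw [Real.sqrt_div (Nat.cast_nonneg k)]
        ring

/-- if every singular value of `R' = Φᵀ R` is within `(√k + t)/√d` of `1`,
then some orthogonal `Q` satisfies `‖Ψ − Φ I_{k×d} Q‖_F ≤ √(k/d)(√k + t)`. -/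
theorem statement2 {n k d : ℕ} (hnk : k ≤ n) (hkd : k ≤ d) (t : ℝ) (ht : 0 ≤ t)
    (U : Matrix (Fin n) (Fin n) ℝ) (hU : Uᵀ * U = 1)
    (R : Matrix (Fin n) (Fin d) ℝ)
    (Φ : Matrix (Fin n) (Fin k) ℝ) (hΦ : Φ = U * rectId n k)
    (Ψ : Matrix (Fin n) (Fin d) ℝ) (hΨ : Ψ = Φ * Φᵀ * R)
    (hH : (Φᵀ * R * (Φᵀ * R)ᵀ).IsHermitian)
    (hsing : ∀ i : Fin k,
      |Real.sqrt (hH.eigenvalues i) - 1| ≤ (Real.sqrt k + t) / Real.sqrt d) :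
    ∃ Q : Matrix (Fin d) (Fin d) ℝ, Qᵀ * Q = 1 ∧
      frob (Ψ - Φ * rectId k d * Q) ≤ Real.sqrt (k / d) * (Real.sqrt k + t) :=
  statement2_general hnk hkd t U hU R Φ hΦ Ψ hΨ hH hsing
end
end

section
/- Let L₁, L₂ ∈ ℝ^{n×n} be symmetric matrices. For s ∈ {1,2}, let V_s ∈ ℝ^{n×n} be orthogonal with L_s = V_s diag(λ₁^{(s)},…,λ_n^{(s)}) V_sᵀ and λ₁^{(s)} ≤ … ≤ λ_n^{(s)}, and let H_s = V_s I_{n×k} I_{k×n} V_sᵀ be the orthogonal projection onto the span of the eigenvectors associated with the k smallest eigenvalues of L_s. If there exists α > 0 with α ≤ λ_{k+1}^{(1)} − λ_k^{(2)} and α ≤ λ_k^{(2)}, then ‖H₂ − H₁‖_F ≤ (√2/α)·‖L₂ − L₁‖_F. -/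
/-
With `W = V₁ᵀ V₂` (orthogonal) and `S` the first `k` indices, conjugating by the orthogonal
matrices `V₁ᵀ` and `V₂` preserves the Frobenius norm and diagonalises both sides entrywise:
`‖H₂ - H₁‖² = ∑ W_ij² (1_S j - 1_S i)²` and `‖L₂ - L₁‖² = ∑ W_ij² (λ⁽²⁾_j - λ⁽¹⁾_i)²`.
The first sum is the mass of `W²` on the two off-diagonal blocks `S × Sᶜ` and `Sᶜ × S`;
since `W` has unit rows and columns the two blocks carry the same mass, so it is twice the
mass on `Sᶜ × S`. On that block the eigenvalue gap gives `(λ⁽²⁾_j - λ⁽¹⁾_i)² ≥ α²`.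
-/

open Matrix MeasureTheory ProbabilityTheory Finset

noncomputable section

lemma rectId_mul_rectId (n k : ℕ) :
    rectId n k * rectId k n = diagonal fun i : Fin n => if (i : ℕ) < k then 1 else 0 := by
  ext i j
  by_cases hik : (i : ℕ) < k
  · rw [mul_apply, Finset.sum_eq_single ⟨i, hik⟩
      (fun b _ hb => by simp [rectId, Fin.ext_iff] at hb ⊢; omega) (by simp)]
    by_cases hij : i = j
    · subst hij; simp [rectId, hik]
    · simp [rectId, hij, Fin.val_eq_val]
  · rw [mul_apply, Finset.sum_eq_zero fun b _ => by simp [rectId]; omega]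
    simp [diagonal_apply, hik]

section SumSq

variable {ι m : Type*} [Fintype ι] [Fintype m]

lemma sum_sq_eq_trace_transpose_mul (M : Matrix m ι ℝ) :
    ∑ i, ∑ j, M i j ^ 2 = trace (Mᵀ * M) := by
  simp only [trace, Matrix.diag, mul_apply, transpose_apply, sq]
  exact Finset.sum_comm

lemma sum_sq_mul_left_of_orthogonal [DecidableEq m] (U : Matrix m m ℝ) (M : Matrix m ι ℝ)
    (hU : Uᵀ * U = 1) : ∑ i, ∑ j, (U * M) i j ^ 2 = ∑ i, ∑ j, M i j ^ 2 := by
  rw [sum_sq_eq_trace_transpose_mul, sum_sq_eq_trace_transpose_mul, transpose_mul,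
    Matrix.mul_assoc, ← Matrix.mul_assoc Uᵀ, hU, Matrix.one_mul]

lemma sum_sq_mul_right_of_orthogonal [DecidableEq ι] (M : Matrix m ι ℝ) (U : Matrix ι ι ℝ)
    (hU : U * Uᵀ = 1) : ∑ i, ∑ j, (M * U) i j ^ 2 = ∑ i, ∑ j, M i j ^ 2 := by
  rw [sum_sq_eq_trace_transpose_mul, sum_sq_eq_trace_transpose_mul, transpose_mul,
    trace_mul_comm, Matrix.mul_assoc, ← Matrix.mul_assoc U, hU, Matrix.one_mul,
    trace_mul_comm]

variable [DecidableEq ι]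

lemma transpose_mul_conj_diagonal_sub_mul (V₁ V₂ : Matrix ι ι ℝ) (hV₁ : V₁ᵀ * V₁ = 1)
    (hV₂ : V₂ᵀ * V₂ = 1) (d₁ d₂ : ι → ℝ) :
    V₁ᵀ * (V₂ * diagonal d₂ * V₂ᵀ - V₁ * diagonal d₁ * V₁ᵀ) * V₂ =
      V₁ᵀ * V₂ * diagonal d₂ - diagonal d₁ * (V₁ᵀ * V₂) := by
  simp only [Matrix.mul_sub, Matrix.sub_mul, Matrix.mul_assoc, hV₂, Matrix.mul_one]
  rw [← Matrix.mul_assoc V₁ᵀ V₁, hV₁, Matrix.one_mul]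

theorem sum_sq_conj_diagonal_sub (V₁ V₂ : Matrix ι ι ℝ) (hV₁ : V₁ᵀ * V₁ = 1)
    (hV₂ : V₂ᵀ * V₂ = 1) (d₁ d₂ : ι → ℝ) :
    ∑ i, ∑ j, (V₂ * diagonal d₂ * V₂ᵀ - V₁ * diagonal d₁ * V₁ᵀ) i j ^ 2 =
      ∑ i, ∑ j, (V₁ᵀ * V₂) i j ^ 2 * (d₂ j - d₁ i) ^ 2 := by
  have hV₁' : V₁ᵀᵀ * V₁ᵀ = 1 := by rw [transpose_transpose]; exact mul_eq_one_comm.mp hV₁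
  rw [← sum_sq_mul_left_of_orthogonal V₁ᵀ _ hV₁',
    ← sum_sq_mul_right_of_orthogonal _ V₂ (mul_eq_one_comm.mp hV₂),
    transpose_mul_conj_diagonal_sub_mul V₁ V₂ hV₁ hV₂]
  refine Finset.sum_congr rfl fun i _ => Finset.sum_congr rfl fun j _ => ?_
  simp only [Matrix.sub_apply, mul_diagonal, diagonal_mul]
  ring

lemma sum_sq_row_eq_one {W : Matrix ι ι ℝ} (hW : W * Wᵀ = 1) (i : ι) :
    ∑ j, W i j ^ 2 = 1 := by
  simpa [mul_apply, sq] using congrFun (congrFun hW i) i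

lemma sum_sq_col_eq_one {W : Matrix ι ι ℝ} (hW : Wᵀ * W = 1) (j : ι) :
    ∑ i, W i j ^ 2 = 1 := by
  simpa [mul_apply, sq] using congrFun (congrFun hW j) j

-- Both sides equal `#S` minus the mass of `W` on the block `S × S`.
theorem sum_sq_block_compl_eq {W : Matrix ι ι ℝ} (hW : Wᵀ * W = 1) (S : Finset ι) :
    ∑ i ∈ S, ∑ j ∈ Sᶜ, W i j ^ 2 = ∑ i ∈ Sᶜ, ∑ j ∈ S, W i j ^ 2 := by
  have hrows : ∑ i ∈ S, ∑ j, W i j ^ 2 = #S := by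
    simp [sum_sq_row_eq_one (mul_eq_one_comm.mp hW)]
  have hcols : ∑ i, ∑ j ∈ S, W i j ^ 2 = #S := by
    rw [Finset.sum_comm]; simp [sum_sq_col_eq_one hW]
  simp only [← Finset.sum_add_sum_compl S, Finset.sum_add_distrib] at hrows hcols
  linarith

theorem sum_sq_mul_indicator_sub_sq {W : Matrix ι ι ℝ} (hW : Wᵀ * W = 1) (S : Finset ι) :
    ∑ i, ∑ j, W i j ^ 2 * ((if j ∈ S then 1 else 0) - (if i ∈ S then 1 else 0)) ^ 2 =
      2 * ∑ i ∈ Sᶜ, ∑ j ∈ S, W i j ^ 2 := by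
  simp_rw [← Finset.sum_add_sum_compl S]
  have hblock := sum_sq_block_compl_eq hW S
  have hS : ∀ a ∈ Sᶜ, a ∉ S := fun a => Finset.mem_compl.mp
  simp +contextual only [hS, if_true, if_false]
  norm_num
  linarith

theorem sq_mul_sum_sq_block_le (W : Matrix ι ι ℝ) (S : Finset ι) (d₁ d₂ : ι → ℝ) {α : ℝ}
    (hα : 0 ≤ α) (hgap : ∀ i ∉ S, ∀ j ∈ S, α ≤ d₁ i - d₂ j) :
    α ^ 2 * ∑ i ∈ Sᶜ, ∑ j ∈ S, W i j ^ 2 ≤ ∑ i, ∑ j, W i j ^ 2 * (d₂ j - d₁ i) ^ 2 := by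
  calc α ^ 2 * ∑ i ∈ Sᶜ, ∑ j ∈ S, W i j ^ 2
      = ∑ i ∈ Sᶜ, ∑ j ∈ S, W i j ^ 2 * α ^ 2 := by simp only [Finset.mul_sum, mul_comm]
    _ ≤ ∑ i ∈ Sᶜ, ∑ j ∈ S, W i j ^ 2 * (d₂ j - d₁ i) ^ 2 := by
      refine Finset.sum_le_sum fun i hi => Finset.sum_le_sum fun j hj => ?_
      have := hgap i (Finset.mem_compl.mp hi) j hj
      exact mul_le_mul_of_nonneg_left (by nlinarith) (sq_nonneg _)
    _ ≤ ∑ i, ∑ j ∈ S, W i j ^ 2 * (d₂ j - d₁ i) ^ 2 :=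
      Finset.sum_le_sum_of_subset_of_nonneg (Finset.subset_univ _) fun i _ _ =>
        Finset.sum_nonneg fun j _ => by positivity
    _ ≤ ∑ i, ∑ j, W i j ^ 2 * (d₂ j - d₁ i) ^ 2 :=
      Finset.sum_le_sum fun i _ => Finset.sum_le_sum_of_subset_of_nonneg (Finset.subset_univ _)
        fun j _ _ => by positivity

end SumSq


lemma Real.sqrt_two_mul_le_of_sq_mul_le {α B Y : ℝ} (hα : 0 < α) (h : α ^ 2 * B ≤ Y) :
    √(2 * B) ≤ √2 / α * √Y := by
  have hB : √B * α ≤ √Y := by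
    rw [← Real.sqrt_sq hα.le, ← Real.sqrt_mul' _ (sq_nonneg α)]
    exact Real.sqrt_le_sqrt (by linarith)
  calc √(2 * B) = √2 * √B := Real.sqrt_mul zero_le_two B
    _ ≤ √2 * (√Y / α) := by gcongr; rwa [le_div_iff₀ hα]
    _ = √2 / α * √Y := by ring

/-- perturbation bound for spectral projectors:
`‖H₂ − H₁‖_F ≤ (√2/α) ‖L₂ − L₁‖_F`. -/
theorem statement15 {n k : ℕ} (hkn : k < n) (α : ℝ) (hα : 0 < α)
    (L1 L2 : Matrix (Fin n) (Fin n) ℝ)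
    (V1 V2 : Matrix (Fin n) (Fin n) ℝ) (hV1 : V1ᵀ * V1 = 1) (hV2 : V2ᵀ * V2 = 1)
    (lam1 lam2 : Fin n → ℝ) (hmono1 : Monotone lam1) (hmono2 : Monotone lam2)
    (hdec1 : L1 = V1 * Matrix.diagonal lam1 * V1ᵀ)
    (hdec2 : L2 = V2 * Matrix.diagonal lam2 * V2ᵀ)
    (hgap : α ≤ lam1 ⟨k, hkn⟩ - lam2 ⟨k - 1, by omega⟩)
    (H1 H2 : Matrix (Fin n) (Fin n) ℝ)
    (hH1 : H1 = V1 * rectId n k * rectId k n * V1ᵀ)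
    (hH2 : H2 = V2 * rectId n k * rectId k n * V2ᵀ) :
    frob (H2 - H1) ≤ Real.sqrt 2 / α * frob (L2 - L1) := by
  set S : Finset (Fin n) := {i | (i : ℕ) < k}
  have hP : rectId n k * rectId k n = diagonal fun i => if i ∈ S then 1 else 0 := by
    simpa [S] using rectId_mul_rectId n k
  have hW : (V1ᵀ * V2)ᵀ * (V1ᵀ * V2) = 1 := by
    rw [transpose_mul, transpose_transpose, Matrix.mul_assoc, ← Matrix.mul_assoc V1,
      mul_eq_one_comm.mp hV1, Matrix.one_mul, hV2]
  have hgapS : ∀ i ∉ S, ∀ j ∈ S, α ≤ lam1 i - lam2 j := by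
    intro i hi j hj
    simp only [S, Finset.mem_filter, Finset.mem_univ, true_and, not_lt] at hi hj
    linarith [hmono1 (show (⟨k, hkn⟩ : Fin n) ≤ i from hi),
      hmono2 (show j ≤ ⟨k - 1, by omega⟩ from Fin.le_def.mpr (by simp; omega))]
  rw [hH1, hH2, Matrix.mul_assoc V1, Matrix.mul_assoc V2, hP, hdec1, hdec2, frob, frob,
    sum_sq_conj_diagonal_sub V1 V2 hV1 hV2, sum_sq_conj_diagonal_sub V1 V2 hV1 hV2,
    sum_sq_mul_indicator_sub_sq hW]
  exact Real.sqrt_two_mul_le_of_sq_mul_le hα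
    (sq_mul_sum_sq_block_le _ S lam1 lam2 hα.le hgapS)
end
end
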